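/- For a subset C ⊆ ℝmax^n the following are equivalent: (1) C is max-plus convex and closed in the product topology of ℝmax^n; (2) C is U-convex for the set U of residuated differences of max-plus affine functions, i.e., for every y ∈ ℝmax^n with y ∉ C there exist w', w'' ∈ ℝmax^n and d', d'' ∈ ℝmax such that, setting u(x) := max(⟨w', x⟩, d') ⊖ max(⟨w'', x⟩, d''), one has u(y) > sup over x ∈ C of u(x). -/

import Mathlib

noncomputable section

/-- `ℝmax = ℝ ∪ {-∞}`, the max-plus semifield. -/
abbrev Rmax := WithBot ℝ

/-- the order topology on `ℝmax`. -/
noncomputable instance : TopologicalSpace Rmax := Preorder.topology Rmax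
instance : OrderTopology Rmax := ⟨rfl⟩

/-- the embedding of `ℝmax = ℝ ∪ {-∞}` into `ℝ̄ = [-∞,+∞]`. -/
def Rmax.toE : Rmax → EReal := WithBot.recBotCoe ⊥ (fun r : ℝ => (r : EReal))

/-- max-plus scalar product `⟨w,x⟩ = max_i (w_i + x_i)` on `ℝmax^n`. -/
def mdot {n : ℕ} (w x : Fin n → Rmax) : Rmax := Finset.univ.sup fun i => w i + x i

/-- residuated difference: `a ⊖ b = a` if `a > b`, and `-∞` otherwise. -/
def rdiff (a b : Rmax) : Rmax := if b < a then a else ⊥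

/-- max-plus convexity of a subset of `ℝmax^n`. -/
def MPConvex {n : ℕ} (C : Set (Fin n → Rmax)) : Prop :=
  ∀ x ∈ C, ∀ y ∈ C, ∀ α β : Rmax, max α β = 0 →
    (fun i => max (α + x i) (β + y i)) ∈ C

/-!
Write `λ(x)` for the largest `l ≤ 0` with `l + x ≤ y`. In homogenised coordinates,
`μ = sup_{x ∈ C} λ(x)` and `ν_j = sup_{x ∈ C} (λ(x) + x_j)` are the coordinates of the max-plus
projection of `(y, 0)` onto the cone spanned by `{(x, 0) | x ∈ C}`, and `ν ≤ y`, `μ ≤ 0`.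

If `μ = 0` and `ν = y`, convexity lets a single point of `C` nearly attain all these suprema at
once; such points converge to `y`, so `y ∈ C` when `C` is closed. Otherwise a coordinate is
deficient: `μ < 0` or `ν_j < y_j`. Then `y` is separated by `0 ⊖ ⟨w, x⟩`, resp. by
`(x_j - q) ⊖ ⟨w, x⟩` with `ν_j < q < y_j`, where `w_i = δ - y_i` on the support of `y` and
`w_i = k` off it. If no `k` worked, the offending points (in the second case first rescaled and
joined with a point where `λ` is nearly `0`, to pin their `j`-th coordinate) would lie in a compact
box and have a limit point in `C` that is `⊥` off the support of `y`; that point would push `μ`,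
resp. `ν_j`, above its value.

Conversely, the sublevel sets of a residuated difference `u` of max-plus affine functions are
closed and `u (max (α + x) (β + z)) ≤ max (u x) (u z)` when `max α β = 0`, so a `U`-convex set is
closed and max-plus convex.
-/

open Filter Topology

namespace Rmax

lemma toE_strictMono : StrictMono Rmax.toE := by
  intro a b h
  induction b using WithBot.recBotCoe with
  | bot => exact absurd h not_lt_bot
  | coe s =>
    induction a using WithBot.recBotCoe with
    | bot => exact EReal.bot_lt_coe s
    | coe r => exact EReal.coe_lt_coe_iff.2 (WithBot.coe_lt_coe.1 h)

lemma range_toE : Set.range Rmax.toE = {⊤}ᶜ := by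
  ext a
  induction a using EReal.rec with
  | bot => exact iff_of_true ⟨⊥, rfl⟩ bot_ne_top
  | coe r => exact iff_of_true ⟨r, rfl⟩ (EReal.coe_ne_top r)
  | top =>
    refine iff_of_false ?_ (by simp)
    rintro ⟨b, hb⟩
    induction b using WithBot.recBotCoe <;> simp [Rmax.toE] at hb

lemma continuous_toE : Continuous Rmax.toE :=
  toE_strictMono.monotone.continuous_of_denseRange <| by
    rw [DenseRange, range_toE]; exact dense_compl_singleton _

lemma coe_add_le_iff {r : ℝ} {a b : Rmax} : (r : Rmax) + a ≤ b ↔ a ≤ ((-r : ℝ) : Rmax) + b := by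
  induction a using WithBot.recBotCoe <;> induction b using WithBot.recBotCoe
  · simp
  · simp
  · simp
  · norm_cast
    constructor <;> intro <;> linarith

lemma le_coe_sub_of_coe_add_le {r c : ℝ} {a : Rmax} (h : (r : Rmax) + a ≤ c) :
    a ≤ ((c - r : ℝ) : Rmax) := by
  rwa [coe_add_le_iff, ← WithBot.coe_add, neg_add_eq_sub] at h

lemma add_coe_neg_lt {a : Rmax} (ha : a ≠ ⊥) {ε : ℝ} (hε : 0 < ε) :
    a + ((-ε : ℝ) : Rmax) < a := by
  lift a to ℝ using ha
  exact_mod_cast (by linarith : a + -ε < a)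

lemma continuous_const_add (c : Rmax) : Continuous (c + ·) := by
  induction c using WithBot.recBotCoe with
  | bot => simpa using continuous_const
  | coe r =>
    refine Monotone.continuous_of_surjective (fun a b h => by gcongr) fun b => ?_
    exact ⟨((-r : ℝ) : Rmax) + b, by rw [← add_assoc, ← WithBot.coe_add]; simp⟩

lemma exists_coe_between {a b : Rmax} (h : a < b) : ∃ r : ℝ, a < r ∧ (r : Rmax) < b := by
  obtain ⟨c, hac, hcb⟩ := exists_between h
  lift c to ℝ using ne_bot_of_gt hac
  exact ⟨c, hac, hcb⟩

lemma tendsto_coe_of_sub_le_of_le_add {α : Type*} {l : Filter α} {a : α → Rmax} {s : ℝ}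
    {ε : α → ℝ} (hε : Tendsto ε l (𝓝 0)) (hlow : ∀ k, ((s - ε k : ℝ) : Rmax) ≤ a k)
    (hup : ∀ k, a k ≤ ((s + ε k : ℝ) : Rmax)) : Tendsto a l (𝓝 (s : Rmax)) := by
  have hlow' : Tendsto (fun k => s - ε k) l (𝓝 s) := by simpa using tendsto_const_nhds.sub hε
  have hup' : Tendsto (fun k => s + ε k) l (𝓝 s) := by simpa using tendsto_const_nhds.add hε
  exact tendsto_of_tendsto_of_tendsto_of_le_of_le ((WithBot.continuous_coe.tendsto s).comp hlow')
    ((WithBot.continuous_coe.tendsto s).comp hup') hlow hup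

lemma eq_bot_of_forall_le_sub_nat {a : Rmax} {b : ℝ} (h : ∀ l : ℕ, a ≤ ((b - l : ℝ) : Rmax)) :
    a = ⊥ := by
  induction a using WithBot.recBotCoe with
  | bot => rfl
  | coe t =>
    obtain ⟨l, hl⟩ := exists_nat_gt (b - t)
    have := WithBot.coe_le_coe.1 (h l)
    linarith

lemma exists_mem_le_forall_eq_bot {ι : Type*} {K : Set (ι → Rmax)} (hK : IsClosed K)
    {B : ι → Rmax} {x : ℕ → ι → Rmax} (hxK : ∀ k, x k ∈ K) (hxB : ∀ k, x k ≤ B) {s : Set ι}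
    {b : ℝ} (hs : ∀ k, ∀ i ∈ s, x k i ≤ ((b - k : ℝ) : Rmax)) :
    ∃ m ∈ K, m ≤ B ∧ ∀ i ∈ s, m i = ⊥ := by
  obtain ⟨m, ⟨hmK, -, hmB⟩, hm⟩ := (isCompact_Icc.inter_left hK).exists_mapClusterPt
    (f := atTop) (tendsto_principal.2 (Eventually.of_forall fun k => ⟨hxK k, bot_le, hxB k⟩))
  refine ⟨m, hmK, hmB, fun i hi => eq_bot_of_forall_le_sub_nat (b := b) fun l => ?_⟩
  refine (isClosed_le (continuous_apply i) continuous_const).mem_of_mapClusterPt hm ?_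
  filter_upwards [eventually_ge_atTop l] with k hk
  refine (hs k i hi).trans (WithBot.coe_le_coe.2 ?_)
  have : (l : ℝ) ≤ k := by exact_mod_cast hk
  linarith

end Rmax

section MaxPlus

variable {n : ℕ}

lemma le_mdot (w x : Fin n → Rmax) (i : Fin n) : w i + x i ≤ mdot w x :=
  Finset.le_sup (f := fun i => w i + x i) (Finset.mem_univ i)

lemma mdot_le_iff {w x : Fin n → Rmax} {c : Rmax} : mdot w x ≤ c ↔ ∀ i, w i + x i ≤ c := by
  simp [mdot]

@[simp] lemma bot_mdot (x : Fin n → Rmax) : mdot ⊥ x = ⊥ := by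
  simp [mdot]

lemma mdot_ite_eq (j : Fin n) (c : Rmax) (x : Fin n → Rmax) :
    mdot (fun i => if i = j then c else ⊥) x = c + x j := by
  refine le_antisymm (mdot_le_iff.2 fun i => ?_)
    (by simpa using le_mdot (fun i => if i = j then c else ⊥) x j)
  split_ifs with h
  · rw [h]
  · simp

lemma mdot_const_add (w x : Fin n → Rmax) (α : Rmax) :
    mdot w (fun i => α + x i) = α + mdot w x := by
  rw [mdot, mdot, Finset.apply_sup_eq_sup_comp (α + ·) (fun a b => (max_add_add_left α a b).symm)
    (by simp)]
  exact Finset.sup_congr rfl fun i _ => add_left_comm _ _ _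

lemma mdot_max_add (w x z : Fin n → Rmax) (α β : Rmax) :
    mdot w (fun i => max (α + x i) (β + z i)) = max (α + mdot w x) (β + mdot w z) := by
  rw [← mdot_const_add, ← mdot_const_add, mdot, mdot, mdot, ← Finset.sup_sup]
  exact Finset.sup_congr rfl fun i _ => (max_add_add_left _ _ _).symm

lemma max_mdot_max_add (w x z : Fin n → Rmax) {α β : Rmax} (d : Rmax) (hαβ : max α β = 0) :
    max (mdot w (fun i => max (α + x i) (β + z i))) d =
      max (α + max (mdot w x) d) (β + max (mdot w z) d) := by
  have hd : max (α + d) (β + d) = d := by rw [max_add_add_right, hαβ, zero_add]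
  rw [mdot_max_add, ← max_add_add_left, ← max_add_add_left, max_max_max_comm, hd]

lemma continuous_mdot (w : Fin n → Rmax) : Continuous (mdot w) :=
  Continuous.finset_sup_apply fun i _ => (Rmax.continuous_const_add (w i)).comp (continuous_apply i)

end MaxPlus

section USeparation

variable {n : ℕ} {C : Set (Fin n → Rmax)}

def rdiffAffine (w' w'' : Fin n → Rmax) (d' d'' : Rmax) (x : Fin n → Rmax) : Rmax :=
  rdiff (max (mdot w' x) d') (max (mdot w'' x) d'')

def IsUSeparated (C : Set (Fin n → Rmax)) (y : Fin n → Rmax) : Prop :=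
  ∃ (w' w'' : Fin n → Rmax) (d' d'' : Rmax),
    (⨆ x ∈ C, Rmax.toE (rdiffAffine w' w'' d' d'' x)) < Rmax.toE (rdiffAffine w' w'' d' d'' y)

lemma IsUSeparated.of_le {y w' w'' : Fin n → Rmax} {d' d'' t : Rmax}
    (hC : ∀ x ∈ C, rdiffAffine w' w'' d' d'' x ≤ t) (hy : t < rdiffAffine w' w'' d' d'' y) :
    IsUSeparated C y :=
  ⟨w', w'', d', d'', (iSup₂_le fun x hx => Rmax.toE_strictMono.monotone (hC x hx)).trans_lt
    (Rmax.toE_strictMono hy)⟩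

lemma isOpen_setOf_lt_toE_rdiffAffine (w' w'' : Fin n → Rmax) (d' d'' : Rmax) (S : EReal) :
    IsOpen {x | S < Rmax.toE (rdiffAffine w' w'' d' d'' x)} := by
  have ha : Continuous fun x => max (mdot w' x) d' := (continuous_mdot w').max continuous_const
  have hb : Continuous fun x => max (mdot w'' x) d'' := (continuous_mdot w'').max continuous_const
  have hset : {x | S < Rmax.toE (rdiffAffine w' w'' d' d'' x)} =
      {x | max (mdot w'' x) d'' < max (mdot w' x) d'} ∩
        {x | S < Rmax.toE (max (mdot w' x) d')} := by
    ext x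
    simp only [Set.mem_ofPred_eq, Set.mem_inter_iff, rdiffAffine, rdiff]
    split_ifs with h <;> simp [h, Rmax.toE]
  rw [hset]
  exact (isOpen_lt hb ha).inter (isOpen_lt continuous_const (Rmax.continuous_toE.comp ha))

lemma isClosed_of_forall_isUSeparated (h : ∀ y, y ∉ C → IsUSeparated C y) : IsClosed C := by
  refine isOpen_compl_iff.1 (isOpen_iff_forall_mem_open.2 fun y hy => ?_)
  obtain ⟨w', w'', d', d'', hsep⟩ := h y hy
  set u := fun x => Rmax.toE (rdiffAffine w' w'' d' d'' x)
  exact ⟨{x | (⨆ x ∈ C, u x) < u x}, fun x hx hxC => (le_biSup u hxC).not_gt hx,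
    isOpen_setOf_lt_toE_rdiffAffine w' w'' d' d'' _, hsep⟩

lemma add_le_rdiff {α a b : Rmax} (hα : α ≤ 0) (h : α + b < α + a) : α + a ≤ rdiff a b := by
  have hba : b < a := lt_of_not_ge fun hab => h.not_ge (by gcongr)
  rw [rdiff, if_pos hba]
  exact add_le_of_nonpos_left hα

lemma rdiff_max_add_le {α β a a' b b' : Rmax} (hα : α ≤ 0) (hβ : β ≤ 0) :
    rdiff (max (α + a) (β + a')) (max (α + b) (β + b')) ≤ max (rdiff a b) (rdiff a' b') := by
  by_cases h : max (α + b) (β + b') < max (α + a) (β + a')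
  · rw [rdiff, if_pos h]
    rcases le_total (α + a) (β + a') with hc | hc
    · rw [max_eq_right hc] at h ⊢
      exact (add_le_rdiff hβ ((le_max_right _ _).trans_lt h)).trans (le_max_right _ _)
    · rw [max_eq_left hc] at h ⊢
      exact (add_le_rdiff hα ((le_max_left _ _).trans_lt h)).trans (le_max_left _ _)
  · rw [rdiff, if_neg h]
    exact bot_le

lemma rdiffAffine_max_add_le (w' w'' : Fin n → Rmax) (d' d'' : Rmax) (x z : Fin n → Rmax)
    {α β : Rmax} (hαβ : max α β = 0) :
    rdiffAffine w' w'' d' d'' (fun i => max (α + x i) (β + z i)) ≤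
      max (rdiffAffine w' w'' d' d'' x) (rdiffAffine w' w'' d' d'' z) := by
  rw [rdiffAffine, max_mdot_max_add _ _ _ _ hαβ, max_mdot_max_add _ _ _ _ hαβ]
  exact rdiff_max_add_le (hαβ ▸ le_max_left α β) (hαβ ▸ le_max_right α β)

lemma mpConvex_of_forall_isUSeparated (h : ∀ y, y ∉ C → IsUSeparated C y) : MPConvex C := by
  intro x hx z hz α β hαβ
  by_contra hxz
  obtain ⟨w', w'', d', d'', hsep⟩ := h _ hxz
  refine hsep.not_ge ((Rmax.toE_strictMono.monotone
    (rdiffAffine_max_add_le w' w'' d' d'' x z hαβ)).trans ?_)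
  set u := fun x => Rmax.toE (rdiffAffine w' w'' d' d'' x)
  rw [Rmax.toE_strictMono.monotone.map_max]
  exact max_le (le_biSup u hx) (le_biSup u hz)

end USeparation

section Projection

variable {n : ℕ} {C : Set (Fin n → Rmax)} {x y z : Fin n → Rmax}

-- In the notation of the header, `homResidual y x = λ(x)`, `projScale C y = μ`, `proj C y = ν`.
def homResidual (y x : Fin n → Rmax) : Rmax := sSup {l | l ≤ 0 ∧ ∀ i, l + x i ≤ y i}

lemma le_homResidual {l : Rmax} (hl : l ≤ 0) (h : ∀ i, l + x i ≤ y i) : l ≤ homResidual y x :=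
  le_csSup ⟨0, fun _ hm => hm.1⟩ ⟨hl, h⟩

lemma homResidual_le_zero : homResidual y x ≤ 0 :=
  csSup_le' fun _ hm => hm.1

lemma homResidual_add_le (i : Fin n) : homResidual y x + x i ≤ y i := by
  by_cases hxi : x i = ⊥
  · simp [hxi]
  obtain ⟨r, hr⟩ := WithBot.ne_bot_iff_exists.1 hxi
  rw [← hr, add_comm, Rmax.coe_add_le_iff]
  exact csSup_le' fun l hl => Rmax.coe_add_le_iff.1 (by rw [add_comm, hr]; exact hl.2 i)

lemma eq_bot_of_homResidual_ne_bot (h : homResidual y x ≠ ⊥) {i : Fin n} (hy : y i = ⊥) :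
    x i = ⊥ := by
  have := homResidual_add_le (y := y) (x := x) i
  rw [hy, le_bot_iff, WithBot.add_eq_bot] at this
  exact this.resolve_left h

def projScale (C : Set (Fin n → Rmax)) (y : Fin n → Rmax) : Rmax := sSup (homResidual y '' C)

def proj (C : Set (Fin n → Rmax)) (y : Fin n → Rmax) (j : Fin n) : Rmax :=
  sSup ((fun x => homResidual y x + x j) '' C)

lemma homResidual_le_projScale (hx : x ∈ C) : homResidual y x ≤ projScale C y :=
  le_csSup ⟨0, by rintro _ ⟨z, -, rfl⟩; exact homResidual_le_zero⟩ ⟨x, hx, rfl⟩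

lemma projScale_le_zero : projScale C y ≤ 0 :=
  csSup_le' (by rintro _ ⟨z, -, rfl⟩; exact homResidual_le_zero)

lemma homResidual_add_le_proj (hx : x ∈ C) (j : Fin n) : homResidual y x + x j ≤ proj C y j :=
  le_csSup ⟨y j, by rintro _ ⟨z, -, rfl⟩; exact homResidual_add_le j⟩ ⟨x, hx, rfl⟩

lemma proj_le (j : Fin n) : proj C y j ≤ y j :=
  csSup_le' (by rintro _ ⟨z, -, rfl⟩; exact homResidual_add_le j)

lemma exists_mem_lt_homResidual {l : Rmax} (h : l < projScale C y) :
    ∃ x ∈ C, l < homResidual y x := by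
  obtain ⟨_, ⟨x, hx, rfl⟩, hlt⟩ := exists_lt_of_lt_csSup' h
  exact ⟨x, hx, hlt⟩

lemma exists_mem_lt_homResidual_add {l : Rmax} {j : Fin n} (h : l < proj C y j) :
    ∃ x ∈ C, l < homResidual y x + x j := by
  obtain ⟨_, ⟨x, hx, rfl⟩, hlt⟩ := exists_lt_of_lt_csSup' h
  exact ⟨x, hx, hlt⟩

lemma MPConvex.exists_homResidual_join (hconv : MPConvex C) (hx : x ∈ C) (hz : z ∈ C)
    (hlx : homResidual y x ≠ ⊥) (hlz : homResidual y z ≠ ⊥) :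
    ∃ m ∈ C, max (homResidual y x) (homResidual y z) ≤ homResidual y m ∧
      ∀ i, max (homResidual y x + x i) (homResidual y z + z i) ≤ homResidual y m + m i := by
  obtain ⟨a, ha⟩ := WithBot.ne_bot_iff_exists.1 hlx
  obtain ⟨b, hb⟩ := WithBot.ne_bot_iff_exists.1 hlz
  set M := max a b
  set m : Fin n → Rmax := fun i => max (((a - M : ℝ) : Rmax) + x i) (((b - M : ℝ) : Rmax) + z i)
  have hm : m ∈ C := hconv x hx z hz _ _ (by
    rw [← WithBot.coe_max, max_sub_sub_right, sub_self]; rfl)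
  have hshift : ∀ i, (M : Rmax) + m i = max (homResidual y x + x i) (homResidual y z + z i) := by
    intro i
    rw [← max_add_add_left, ← add_assoc, ← add_assoc, ← WithBot.coe_add, ← WithBot.coe_add, ← ha,
      ← hb, add_sub_cancel, add_sub_cancel]
  have hM0 : M ≤ 0 := max_le (by exact_mod_cast ha ▸ homResidual_le_zero)
    (by exact_mod_cast hb ▸ homResidual_le_zero)
  have hM : (M : Rmax) ≤ homResidual y m := le_homResidual (by exact_mod_cast hM0)
    fun i => (hshift i).trans_le (max_le (homResidual_add_le i) (homResidual_add_le i))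
  refine ⟨m, hm, by rw [← ha, ← hb, ← WithBot.coe_max]; exact hM, fun i => ?_⟩
  rw [← hshift]
  gcongr

lemma MPConvex.exists_mem_forall_lt_homResidual_add (hconv : MPConvex C)
    (hμ : projScale C y = 0) (hν : proj C y = y) {ε : ℝ} (hε : 0 < ε) :
    ∃ c ∈ C, ((-ε : ℝ) : Rmax) < homResidual y c ∧
      ∀ i, y i ≠ ⊥ → y i + ((-ε : ℝ) : Rmax) < homResidual y c + c i := by
  suffices ∀ F : Finset (Fin n), ∃ c ∈ C, ((-ε : ℝ) : Rmax) < homResidual y c ∧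
      ∀ i ∈ F, y i ≠ ⊥ → y i + ((-ε : ℝ) : Rmax) < homResidual y c + c i by
    obtain ⟨c, hc, hc0, hci⟩ := this Finset.univ
    exact ⟨c, hc, hc0, fun i => hci i (Finset.mem_univ i)⟩
  intro F
  induction F using Finset.induction with
  | empty =>
    obtain ⟨c, hc, hc0⟩ := exists_mem_lt_homResidual (C := C) (y := y) (l := ((-ε : ℝ) : Rmax))
      (by rw [hμ]; exact_mod_cast neg_lt_zero.2 hε)
    exact ⟨c, hc, hc0, by simp⟩
  | insert j F _ ih =>
    obtain ⟨c, hc, hc0, hcF⟩ := ih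
    by_cases hyj : y j = ⊥
    · refine ⟨c, hc, hc0, fun i hi hyi => hcF i ?_ hyi⟩
      exact (Finset.mem_insert.1 hi).resolve_left (by rintro rfl; exact hyi hyj)
    obtain ⟨z, hz, hzj⟩ :=
      exists_mem_lt_homResidual_add ((Rmax.add_coe_neg_lt hyj hε).trans_eq (congrFun hν j).symm)
    have hzb : homResidual y z ≠ ⊥ := fun h => by simp [h] at hzj
    obtain ⟨m, hm, hm0, hmi⟩ := hconv.exists_homResidual_join hc hz (ne_bot_of_gt hc0) hzb
    refine ⟨m, hm, hc0.trans_le ((le_max_left _ _).trans hm0), fun i hi hyi => ?_⟩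
    rcases Finset.mem_insert.1 hi with rfl | hiF
    · exact hzj.trans_le ((le_max_right _ _).trans (hmi i))
    · exact (hcF i hiF hyi).trans_le ((le_max_left _ _).trans (hmi i))

lemma MPConvex.mem_of_proj_eq (hconv : MPConvex C) (hcl : IsClosed C) (hμ : projScale C y = 0)
    (hν : proj C y = y) : y ∈ C := by
  choose c hcC hc0 hci using fun k : ℕ =>
    hconv.exists_mem_forall_lt_homResidual_add hμ hν (Nat.one_div_pos_of_nat (n := k))
  refine hcl.mem_of_tendsto (b := atTop) (f := c) (tendsto_pi_nhds.2 fun i => ?_)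
    (Eventually.of_forall hcC)
  by_cases hyi : y i = ⊥
  · simp only [hyi, eq_bot_of_homResidual_ne_bot (ne_bot_of_gt (hc0 _)) hyi]
    exact tendsto_const_nhds
  obtain ⟨s, hs⟩ := WithBot.ne_bot_iff_exists.1 hyi
  rw [← hs]
  refine Rmax.tendsto_coe_of_sub_le_of_le_add tendsto_one_div_add_atTop_nhds_zero_nat
    (fun k => ?_) (fun k => ?_)
  · have := (hci k i hyi).le.trans (add_le_of_nonpos_left homResidual_le_zero)
    rwa [← hs, ← WithBot.coe_add, ← sub_eq_add_neg] at this
  · have := (add_le_add_left (hc0 k).le (c k i)).trans (homResidual_add_le i)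
    rwa [← hs, Rmax.coe_add_le_iff, ← WithBot.coe_add, neg_neg, add_comm] at this

end Projection

section Separation

variable {n : ℕ} {C : Set (Fin n → Rmax)} {x y : Fin n → Rmax}

def sepWeight (y : Fin n → Rmax) (δ : ℝ) (k : ℕ) (i : Fin n) : Rmax :=
  (y i).recBotCoe ((k : ℝ) : Rmax) fun s => ((δ - s : ℝ) : Rmax)

def sepBound (y : Fin n → Rmax) (δ c : ℝ) (k : ℕ) (i : Fin n) : Rmax :=
  (y i).recBotCoe ((c - k : ℝ) : Rmax) fun s => ((c - δ + s : ℝ) : Rmax)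

lemma mdot_sepWeight_self_le (δ : ℝ) (k : ℕ) : mdot (sepWeight y δ k) y ≤ δ := by
  refine mdot_le_iff.2 fun i => ?_
  cases hyi : y i using WithBot.recBotCoe with
  | bot => simp
  | coe s => simp [sepWeight, hyi, ← WithBot.coe_add]

lemma le_sepBound_of_mdot_sepWeight_lt {δ c : ℝ} {k : ℕ}
    (h : mdot (sepWeight y δ k) x < c) : x ≤ sepBound y δ c k := by
  intro i
  have hi := (le_mdot _ x i).trans h.le
  cases hyi : y i using WithBot.recBotCoe with
  | bot =>
    simp only [sepWeight, sepBound, hyi, WithBot.recBotCoe_bot] at hi ⊢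
    exact Rmax.le_coe_sub_of_coe_add_le hi
  | coe s =>
    simp only [sepWeight, sepBound, hyi, WithBot.recBotCoe_coe] at hi ⊢
    convert Rmax.le_coe_sub_of_coe_add_le hi using 2
    ring

lemma sepBound_le_sepBound_zero (y : Fin n → Rmax) (δ c : ℝ) (k : ℕ) :
    sepBound y δ c k ≤ sepBound y δ c 0 := by
  intro i
  cases hyi : y i using WithBot.recBotCoe with
  | bot => simp [sepBound, hyi]
  | coe s => simp [sepBound, hyi]

lemma coe_add_sepBound (a δ c : ℝ) (k : ℕ) (i : Fin n) :
    (a : Rmax) + sepBound y δ c k i = sepBound y δ (a + c) k i := by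
  cases hyi : y i using WithBot.recBotCoe with
  | bot => simp only [sepBound, hyi, WithBot.recBotCoe_bot, ← WithBot.coe_add]; ring_nf
  | coe s => simp only [sepBound, hyi, WithBot.recBotCoe_coe, ← WithBot.coe_add]; ring_nf

lemma MPConvex.max_add_mem (hconv : MPConvex C) {z : Fin n → Rmax} (hx : x ∈ C) (hz : z ∈ C)
    {β : Rmax} (hβ : β ≤ 0) : (fun i => max (x i) (β + z i)) ∈ C := by
  simpa using hconv x hx z hz 0 β (max_eq_left hβ)

lemma isUSeparated_of_projScale_lt_zero (hcl : IsClosed C) (hμ : projScale C y < 0) :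
    IsUSeparated C y := by
  obtain ⟨δ, hμδ, hδ⟩ := Rmax.exists_coe_between hμ
  obtain ⟨k, hk⟩ : ∃ k : ℕ, ∀ x ∈ C, (0 : Rmax) ≤ mdot (sepWeight y δ k) x := by
    by_contra! hbad
    choose x hxC hx using hbad
    have hxB (k : ℕ) : x k ≤ sepBound y δ 0 k :=
      le_sepBound_of_mdot_sepWeight_lt (by exact_mod_cast hx k)
    obtain ⟨m, hmC, hmB, hmbot⟩ := Rmax.exists_mem_le_forall_eq_bot hcl hxC
      (fun k => (hxB k).trans (sepBound_le_sepBound_zero y δ 0 k)) (s := {i | y i = ⊥}) (b := 0)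
      (fun k i hi => by simpa [sepBound, show y i = ⊥ from hi] using hxB k i)
    have hδm : (δ : Rmax) ≤ homResidual y m := le_homResidual hδ.le fun i => by
      cases hyi : y i using WithBot.recBotCoe with
      | bot => simp [hmbot i hyi]
      | coe s =>
        calc (δ : Rmax) + m i ≤ δ + sepBound y δ 0 0 i := by gcongr; exact hmB i
          _ = s := by rw [coe_add_sepBound]; simp [sepBound, hyi]
    exact hμδ.not_ge (hδm.trans (homResidual_le_projScale hmC))
  refine IsUSeparated.of_le (w' := ⊥) (w'' := sepWeight y δ k) (d' := 0) (d'' := ⊥) (t := ⊥)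
    (fun x hx => ?_) ?_
  · simp [rdiffAffine, rdiff, (hk x hx).not_gt]
  · simp [rdiffAffine, rdiff, (mdot_sepWeight_self_le δ k).trans_lt hδ]

lemma MPConvex.exists_mem_ge_le_sepBound (hconv : MPConvex C) {x0 : Fin n → Rmax} (hx0 : x0 ∈ C)
    (hx : x ∈ C) {q ε : ℝ} {k : ℕ} {j : Fin n}
    (hxw : mdot (sepWeight y ε k) x < ((-q : ℝ) : Rmax) + x j)
    (hxj : (ε : Rmax) < ((-q : ℝ) : Rmax) + x j) :
    ∃ m ∈ C, ((q + ε : ℝ) : Rmax) ≤ m j ∧ m ≤ x0 ⊔ sepBound y ε ε k := by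
  obtain ⟨r, hr⟩ := WithBot.ne_bot_iff_exists.1 fun h : x j = ⊥ => by simp [h] at hxj
  rw [← hr, ← WithBot.coe_add] at hxw hxj
  have hrq : q + ε - r ≤ 0 := by linarith [WithBot.coe_lt_coe.1 hxj]
  refine ⟨_, hconv.max_add_mem hx0 hx (β := ((q + ε - r : ℝ) : Rmax)) (by exact_mod_cast hrq),
    le_max_of_le_right ?_, fun i => max_le_max le_rfl ?_⟩
  · rw [← hr, ← WithBot.coe_add, sub_add_cancel]
  · calc ((q + ε - r : ℝ) : Rmax) + x i ≤ ((q + ε - r : ℝ) : Rmax) + sepBound y ε (-q + r) k i := by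
          gcongr; exact le_sepBound_of_mdot_sepWeight_lt hxw i
      _ = sepBound y ε ε k i := by rw [coe_add_sepBound]; ring_nf

lemma neg_le_homResidual_of_le_sup_sepBound {x0 m : Fin n → Rmax} {ε : ℝ}
    (hx0 : ((-ε : ℝ) : Rmax) < homResidual y x0) (hmB : m ≤ x0 ⊔ sepBound y ε ε 0)
    (hmbot : ∀ i, y i = ⊥ → m i = ⊥) : ((-ε : ℝ) : Rmax) ≤ homResidual y m := by
  have hε : ((-ε : ℝ) : Rmax) ≤ 0 := (hx0.trans_le homResidual_le_zero).le
  refine le_homResidual hε fun i => ?_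
  cases hyi : y i using WithBot.recBotCoe with
  | bot => simp [hmbot i hyi]
  | coe s =>
    have hmi : m i ≤ max (x0 i) s := by simpa [sepBound, hyi] using hmB i
    calc ((-ε : ℝ) : Rmax) + m i ≤ max (((-ε : ℝ) : Rmax) + x0 i) (((-ε : ℝ) : Rmax) + s) := by
          rw [max_add_add_left]; gcongr
      _ ≤ s := max_le (hyi ▸ (add_le_add_left hx0.le _).trans (homResidual_add_le i))
          (add_le_of_nonpos_left hε)

lemma MPConvex.exists_nat_forall_le_of_sepWeight_lt (hconv : MPConvex C) (hcl : IsClosed C)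
    {x0 : Fin n → Rmax} (hx0C : x0 ∈ C) {ε q : ℝ} (hx0 : ((-ε : ℝ) : Rmax) < homResidual y x0)
    {j : Fin n} (hνq : proj C y j < q) :
    ∃ k : ℕ, ∀ x ∈ C, mdot (sepWeight y ε k) x < ((-q : ℝ) : Rmax) + x j →
      ((-q : ℝ) : Rmax) + x j ≤ ε := by
  by_contra! hbad
  choose x hxC hxw hxj using hbad
  choose m' hm'C hm'j hm'B using fun k =>
    hconv.exists_mem_ge_le_sepBound hx0C (hxC k) (hxw k) (hxj k)
  have hx0bot (i : Fin n) (hi : y i = ⊥) : x0 i = ⊥ :=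
    eq_bot_of_homResidual_ne_bot (ne_bot_of_gt hx0) hi
  obtain ⟨m, ⟨hmC, hmj⟩, hmB, hmbot⟩ := Rmax.exists_mem_le_forall_eq_bot
    (hcl.inter (isClosed_le continuous_const (continuous_apply j))) (fun k => ⟨hm'C k, hm'j k⟩)
    (fun k => (hm'B k).trans (sup_le_sup_left (sepBound_le_sepBound_zero y ε ε k) x0))
    (s := {i | y i = ⊥}) (b := ε)
    (fun k i hi => by simpa [hx0bot i hi, sepBound, show y i = ⊥ from hi] using hm'B k i)
  have := (add_le_add (neg_le_homResidual_of_le_sup_sepBound hx0 hmB hmbot) hmj).trans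
    (homResidual_add_le_proj hmC j)
  rw [← WithBot.coe_add, show -ε + (q + ε) = q by ring] at this
  exact hνq.not_ge this

lemma MPConvex.isUSeparated_of_proj_lt (hconv : MPConvex C) (hcl : IsClosed C)
    (hμ : projScale C y = 0) {j : Fin n} (hν : proj C y j < y j) : IsUSeparated C y := by
  obtain ⟨q, hνq, hqy⟩ := Rmax.exists_coe_between hν
  obtain ⟨yj, hyj⟩ := WithBot.ne_bot_iff_exists.1 (ne_bot_of_gt hqy)
  rw [← hyj, WithBot.coe_lt_coe] at hqy
  set ε := (yj - q) / 2
  have hε : 0 < ε := by positivity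
  obtain ⟨x0, hx0C, hx0⟩ := exists_mem_lt_homResidual (C := C) (y := y) (l := ((-ε : ℝ) : Rmax))
    (by rw [hμ]; exact_mod_cast neg_lt_zero.2 hε)
  obtain ⟨k, hk⟩ := hconv.exists_nat_forall_le_of_sepWeight_lt hcl hx0C hx0 hνq
  have hy : ((-q : ℝ) : Rmax) + y j = ((2 * ε : ℝ) : Rmax) := by
    rw [← hyj, ← WithBot.coe_add]; congr 1; ring
  have hw : mdot (sepWeight y ε k) y < ((-q : ℝ) : Rmax) + y j :=
    (mdot_sepWeight_self_le ε k).trans_lt (by rw [hy]; exact_mod_cast (by linarith : ε < 2 * ε))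
  refine IsUSeparated.of_le (w' := fun i => if i = j then ((-q : ℝ) : Rmax) else ⊥)
    (w'' := sepWeight y ε k) (d' := ⊥) (d'' := ⊥) (t := ε) (fun x hx => ?_) ?_
  · simp only [rdiffAffine, rdiff, mdot_ite_eq, max_bot_right]
    split_ifs with h
    · exact hk x hx h
    · exact bot_le
  · simp only [rdiffAffine, rdiff, mdot_ite_eq, max_bot_right]
    rw [if_pos hw, hy]
    exact_mod_cast (by linarith : ε < 2 * ε)

lemma MPConvex.isUSeparated_of_notMem (hconv : MPConvex C) (hcl : IsClosed C) (hy : y ∉ C) :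
    IsUSeparated C y := by
  rcases projScale_le_zero.lt_or_eq with hμ | hμ
  · exact isUSeparated_of_projScale_lt_zero hcl hμ
  obtain ⟨j, hj⟩ := Function.ne_iff.1 fun hν => hy (hconv.mem_of_proj_eq hcl hμ hν)
  exact hconv.isUSeparated_of_proj_lt hcl hμ ((proj_le j).lt_of_ne hj)

end Separation

/-- **A subset of `ℝmax^n` is closed and max-plus convex iff it is `U`-convex
for the set `U` of residuated differences of max-plus affine functions.** -/
theorem stmt2 {n : ℕ} (C : Set (Fin n → Rmax)) :
    (MPConvex C ∧ IsClosed C) ↔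
    (∀ y, y ∉ C → ∃ (w' w'' : Fin n → Rmax) (d' d'' : Rmax),
      (⨆ x ∈ C, Rmax.toE (rdiff (max (mdot w' x) d') (max (mdot w'' x) d''))) <
        Rmax.toE (rdiff (max (mdot w' y) d') (max (mdot w'' y) d''))) :=
  ⟨fun ⟨hconv, hcl⟩ _ hy => hconv.isUSeparated_of_notMem hcl hy,
    fun h => ⟨mpConvex_of_forall_isUSeparated h, isClosed_of_forall_isUSeparated h⟩⟩

end
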